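/- Let H be a connected graded Hopf algebra, A a commutative algebra with an idempotent linear map K : A → A such that ker K ∩ im K = 0; assume the Rota–Baxter identity K(a)K(b) = K(K(a)b + aK(b) − ab). Let φ : H → A be a character. Then the Birkhoff decomposition exists: there are unique unital maps φ_− (with φ_−(H^+) ⊆ im K) and φ_+ (with φ_+(H^+) ⊆ ker K) such that φ = φ_−^{⋆−1} ⋆ φ_+, given recursively by φ_−(x) = −K(φ(x) + Σ φ_−(x')φ(x'')) and φ_+(x) = (id − K)(φ(x) + Σ φ_−(x')φ(x'')) on homogeneous x of positive degree. -/
import Mathlib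


open TensorProduct Coalgebra

/-- Convolution product of linear maps from a coalgebra to an algebra. -/
noncomputable def conv {k H A : Type*} [CommSemiring k] [AddCommMonoid H] [Module k H]
    [Coalgebra k H] [Semiring A] [Algebra k A] (φ ψ : H →ₗ[k] A) : H →ₗ[k] A :=
  LinearMap.mul' k A ∘ₗ TensorProduct.map φ ψ ∘ₗ Coalgebra.comul

/-- The convolution unit `u_A ∘ ε`. -/
noncomputable def convUnit (k H A : Type*) [CommSemiring k] [AddCommMonoid H] [Module k H]
    [Coalgebra k H] [Semiring A] [Algebra k A] : H →ₗ[k] A :=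
  Algebra.linearMap k A ∘ₗ Coalgebra.counit

section ConvBasic
variable {k H A : Type*} [CommSemiring k] [AddCommMonoid H] [Module k H]
    [Coalgebra k H] [Semiring A] [Algebra k A]

lemma conv_unit_left (g : H →ₗ[k] A) : conv (convUnit k H A) g = g := by
  ext x
  have h : TensorProduct.map (convUnit k H A) g =
      (TensorProduct.map (Algebra.linearMap k A) g) ∘ₗ
        (LinearMap.rTensor H (Coalgebra.counit (R := k))) := by
    rw [LinearMap.rTensor, ← TensorProduct.map_comp]; rfl
  simp only [conv, LinearMap.comp_apply, h, Coalgebra.rTensor_counit_comul]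
  simp [LinearMap.mul'_apply]

lemma conv_unit_right (g : H →ₗ[k] A) : conv g (convUnit k H A) = g := by
  ext x
  have h : TensorProduct.map g (convUnit k H A) =
      (TensorProduct.map g (Algebra.linearMap k A)) ∘ₗ
        (LinearMap.lTensor H (Coalgebra.counit (R := k))) := by
    rw [LinearMap.lTensor, ← TensorProduct.map_comp]; rfl
  simp only [conv, LinearMap.comp_apply, h, Coalgebra.lTensor_counit_comul]
  simp [LinearMap.mul'_apply]

lemma conv_add_left (f f' g : H →ₗ[k] A) : conv (f + f') g = conv f g + conv f' g := by
  simp [conv, TensorProduct.map_add_left, LinearMap.add_comp, LinearMap.comp_add]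

lemma conv_add_right (f g g' : H →ₗ[k] A) : conv f (g + g') = conv f g + conv f g' := by
  simp [conv, TensorProduct.map_add_right, LinearMap.add_comp, LinearMap.comp_add]

lemma conv_assoc (f g h : H →ₗ[k] A) : conv (conv f g) h = conv f (conv g h) := by
  have h1 : TensorProduct.map (conv f g) h =
      (TensorProduct.map (LinearMap.mul' k A) h) ∘ₗ
        (LinearMap.rTensor H (TensorProduct.map f g)) ∘ₗ
          (LinearMap.rTensor H (Coalgebra.comul (R := k))) := by
    simp only [conv, LinearMap.rTensor, ← TensorProduct.map_comp, LinearMap.id_comp,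
      LinearMap.comp_id]
  have h2 : TensorProduct.map f (conv g h) =
      (TensorProduct.map f (LinearMap.mul' k A)) ∘ₗ
        (LinearMap.lTensor H (TensorProduct.map g h)) ∘ₗ
          (LinearMap.lTensor H (Coalgebra.comul (R := k))) := by
    simp only [conv, LinearMap.lTensor, ← TensorProduct.map_comp, LinearMap.id_comp,
      LinearMap.comp_id]
  have key : (LinearMap.mul' k A) ∘ₗ (TensorProduct.map (LinearMap.mul' k A) h) ∘ₗ
        (LinearMap.rTensor H (TensorProduct.map f g)) =
      ((LinearMap.mul' k A) ∘ₗ (TensorProduct.map f (LinearMap.mul' k A)) ∘ₗ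
        (LinearMap.lTensor H (TensorProduct.map g h))) ∘ₗ
          (TensorProduct.assoc k H H H).toLinearMap := by
    apply TensorProduct.ext_threefold
    intro x y z
    simp [LinearMap.mul'_apply, mul_assoc]
  ext x
  rw [show conv (conv f g) h x
        = (LinearMap.mul' k A) ((TensorProduct.map (conv f g) h) (Coalgebra.comul x)) from rfl,
     show conv f (conv g h) x
        = (LinearMap.mul' k A) ((TensorProduct.map f (conv g h)) (Coalgebra.comul x)) from rfl,
     h1, h2]
  simp only [LinearMap.comp_apply]
  rw [← Coalgebra.coassoc_apply]
  exact congr($(key) ((LinearMap.rTensor H (Coalgebra.comul (R := k))) (Coalgebra.comul x)))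

end ConvBasic

section ConvGroup
variable {k H A : Type*} [CommSemiring k] [AddCommMonoid H] [Module k H]
    [Coalgebra k H] [Ring A] [Algebra k A]

/-- convolution with fixed right factor, as an additive monoid hom -/
noncomputable def convL (g : H →ₗ[k] A) : (H →ₗ[k] A) →+ (H →ₗ[k] A) :=
  AddMonoidHom.mk' (fun f => conv f g) (fun a b => conv_add_left a b g)

/-- convolution with fixed left factor, as an additive monoid hom -/
noncomputable def convR (f : H →ₗ[k] A) : (H →ₗ[k] A) →+ (H →ₗ[k] A) :=
  AddMonoidHom.mk' (fun g => conv f g) (conv_add_right f)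

lemma conv_sub_left (f f' g : H →ₗ[k] A) : conv (f - f') g = conv f g - conv f' g :=
  map_sub (convL g) f f'

lemma conv_sub_right (f g g' : H →ₗ[k] A) : conv f (g - g') = conv f g - conv f g' :=
  map_sub (convR f) g g'

lemma conv_zsmul_right (z : ℤ) (f g : H →ₗ[k] A) : conv f (z • g) = z • conv f g :=
  map_zsmul (convR f) z g

lemma conv_zsmul_left (z : ℤ) (f g : H →ₗ[k] A) : conv (z • f) g = z • conv f g :=
  map_zsmul (convL g) z f

end ConvGroup

section Graded
variable {k H A : Type*} [Field k] [Ring H] [HopfAlgebra k H] [CommRing A] [Algebra k A]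
  (ℳ : ℕ → Submodule k H) [GradedAlgebra ℳ]

/-- graded projection onto `ℳ m`, as an endomorphism of `H`. -/
noncomputable def gproj (m : ℕ) : H →ₗ[k] H :=
  (ℳ m).subtype ∘ₗ (DirectSum.component k ℕ (fun i => ℳ i) m) ∘ₗ
    (DirectSum.decomposeLinearEquiv ℳ).toLinearMap

lemma gproj_of_mem_same {m : ℕ} {x : H} (hx : x ∈ ℳ m) : gproj ℳ m x = x := by
  simp only [gproj, LinearMap.comp_apply, LinearEquiv.coe_coe,
    DirectSum.decomposeLinearEquiv_apply]
  exact DirectSum.decompose_of_mem_same ℳ hx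

lemma gproj_of_mem_ne {m p : ℕ} {x : H} (hx : x ∈ ℳ p) (h : p ≠ m) : gproj ℳ m x = 0 := by
  simp only [gproj, LinearMap.comp_apply, LinearEquiv.coe_coe,
    DirectSum.decomposeLinearEquiv_apply]
  exact DirectSum.decompose_of_mem_ne ℳ hx h

lemma ext_of_graded {f g : H →ₗ[k] A} (h : ∀ n, ∀ x ∈ ℳ n, f x = g x) : f = g := by
  have htop : (⨆ n, ℳ n) = ⊤ :=
    (DirectSum.Decomposition.isInternal ℳ).submodule_iSup_eq_top
  ext x
  have hx : x ∈ ⨆ n, ℳ n := htop ▸ Submodule.mem_top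
  have hle : (⨆ n, ℳ n) ≤ LinearMap.ker (f - g) := by
    refine iSup_le fun n y hy => ?_
    simp [LinearMap.mem_ker, LinearMap.sub_apply, h n y hy]
  simpa [LinearMap.mem_ker, LinearMap.sub_apply, sub_eq_zero] using hle hx

/-- glue a family of linear maps along the grading -/
noncomputable def glue (F : ℕ → (H →ₗ[k] A)) : H →ₗ[k] A :=
  (DirectSum.toModule k ℕ A fun n => (F n) ∘ₗ (ℳ n).subtype) ∘ₗ
    (DirectSum.decomposeLinearEquiv ℳ).toLinearMap

lemma glue_apply (F : ℕ → (H →ₗ[k] A)) {n : ℕ} {x : H} (hx : x ∈ ℳ n) :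
    glue ℳ F x = F n x := by
  simp only [glue, LinearMap.comp_apply, LinearEquiv.coe_coe,
    DirectSum.decomposeLinearEquiv_apply]
  rw [DirectSum.decompose_of_mem ℳ hx, ← DirectSum.lof_eq_of k, DirectSum.toModule_lof]
  rfl

lemma conv_vanish (hcomul : ∀ (n : ℕ), ∀ x ∈ ℳ n, comul (R := k) x ∈
      ⨆ (p : ℕ × ℕ) (_ : p.1 + p.2 = n),
        LinearMap.range (TensorProduct.map (ℳ p.1).subtype (ℳ p.2).subtype))
    {n : ℕ} (μ γ : H →ₗ[k] A) (hμ : ∀ p, p < n → ∀ y ∈ ℳ p, μ y = 0)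
    (hγ : ∀ y ∈ ℳ 0, γ y = 0) : ∀ x ∈ ℳ n, conv μ γ x = 0 := by
  intro x hx
  have hker : (⨆ (p : ℕ × ℕ) (_ : p.1 + p.2 = n),
      LinearMap.range (TensorProduct.map (ℳ p.1).subtype (ℳ p.2).subtype)) ≤
      LinearMap.ker (LinearMap.mul' k A ∘ₗ TensorProduct.map μ γ) := by
    refine iSup_le fun p => iSup_le fun hp => LinearMap.range_le_ker_iff.mpr ?_
    apply TensorProduct.ext'
    intro a b
    rcases Nat.eq_zero_or_pos p.2 with h2 | h2
    · have hb : γ (b : H) = 0 := hγ b (h2 ▸ b.2)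
      simp [LinearMap.mul'_apply, hb]
    · have hp1 : p.1 < n := by omega
      have ha : μ (a : H) = 0 := hμ p.1 hp1 a a.2
      simp [LinearMap.mul'_apply, ha]
  have := hker (hcomul n x hx)
  simpa [conv, LinearMap.mem_ker] using this

lemma conv_vanish' (hcomul : ∀ (n : ℕ), ∀ x ∈ ℳ n, comul (R := k) x ∈
      ⨆ (p : ℕ × ℕ) (_ : p.1 + p.2 = n),
        LinearMap.range (TensorProduct.map (ℳ p.1).subtype (ℳ p.2).subtype))
    {n : ℕ} (γ μ : H →ₗ[k] A) (hμ : ∀ p, p < n → ∀ y ∈ ℳ p, μ y = 0)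
    (hγ : ∀ y ∈ ℳ 0, γ y = 0) : ∀ x ∈ ℳ n, conv γ μ x = 0 := by
  intro x hx
  have hker : (⨆ (p : ℕ × ℕ) (_ : p.1 + p.2 = n),
      LinearMap.range (TensorProduct.map (ℳ p.1).subtype (ℳ p.2).subtype)) ≤
      LinearMap.ker (LinearMap.mul' k A ∘ₗ TensorProduct.map γ μ) := by
    refine iSup_le fun p => iSup_le fun hp => LinearMap.range_le_ker_iff.mpr ?_
    apply TensorProduct.ext'
    intro a b
    rcases Nat.eq_zero_or_pos p.1 with h1 | h1
    · have ha : γ (a : H) = 0 := hγ a (h1 ▸ a.2)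
      simp [LinearMap.mul'_apply, ha]
    · have hp2 : p.2 < n := by omega
      have hb : μ (b : H) = 0 := hμ p.2 hp2 b b.2
      simp [LinearMap.mul'_apply, hb]
  have := hker (hcomul n x hx)
  simpa [conv, LinearMap.mem_ker] using this

lemma counit_vanish (hcomul : ∀ (n : ℕ), ∀ x ∈ ℳ n, comul (R := k) x ∈
      ⨆ (p : ℕ × ℕ) (_ : p.1 + p.2 = n),
        LinearMap.range (TensorProduct.map (ℳ p.1).subtype (ℳ p.2).subtype))
    (hconn : ℳ 0 = Submodule.span k {(1 : H)})
    {n : ℕ} (hn : 0 < n) : ∀ x ∈ ℳ n, Coalgebra.counit (R := k) x = 0 := by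
  intro x hx
  set g : H ⊗[k] H →ₗ[k] H :=
    (gproj ℳ 0) ∘ₗ (TensorProduct.lid k H).toLinearMap ∘ₗ
      (LinearMap.rTensor H (Coalgebra.counit (R := k))) with hg
  set h : H ⊗[k] H →ₗ[k] H :=
    (Algebra.linearMap k H) ∘ₗ (Coalgebra.counit (R := k)) ∘ₗ (gproj ℳ n) ∘ₗ
      (TensorProduct.rid k H).toLinearMap ∘ₗ
        (LinearMap.lTensor H (Coalgebra.counit (R := k))) with hh
  have hker : (⨆ (p : ℕ × ℕ) (_ : p.1 + p.2 = n),
      LinearMap.range (TensorProduct.map (ℳ p.1).subtype (ℳ p.2).subtype)) ≤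
      LinearMap.ker (g - h) := by
    refine iSup_le fun p => iSup_le fun hp => LinearMap.range_le_ker_iff.mpr ?_
    apply TensorProduct.ext'
    intro a b
    simp only [LinearMap.comp_apply, LinearMap.sub_apply, LinearMap.zero_apply,
      TensorProduct.map_tmul, Submodule.coe_subtype, sub_eq_zero, hg, hh,
      LinearMap.rTensor_tmul, LinearMap.lTensor_tmul, TensorProduct.lid_tmul,
      TensorProduct.rid_tmul, LinearEquiv.coe_coe]
    rcases Nat.eq_zero_or_pos p.2 with h2 | h2
    · have hb0 : (b : H) ∈ ℳ 0 := h2 ▸ b.2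
      obtain ⟨β, hβ⟩ := Submodule.mem_span_singleton.mp (hconn ▸ hb0)
      have hp1 : p.1 = n := by omega
      have ha : (a : H) ∈ ℳ n := hp1 ▸ a.2
      rw [map_smul, map_smul, gproj_of_mem_same ℳ ha, gproj_of_mem_same ℳ hb0, ← hβ]
      simp [Algebra.algebraMap_eq_smul_one, smul_smul, mul_comm]
    · have hp1 : p.1 ≠ n := by omega
      rw [map_smul, map_smul, gproj_of_mem_ne ℳ a.2 hp1,
        gproj_of_mem_ne ℳ b.2 (by omega : p.2 ≠ 0)]
      simp
  have heq : g (Coalgebra.comul (R := k) x) = h (Coalgebra.comul (R := k) x) := by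
    have := hker (hcomul n x hx)
    rw [LinearMap.mem_ker, LinearMap.sub_apply, sub_eq_zero] at this
    exact this
  have hgval : g (Coalgebra.comul (R := k) x) = 0 := by
    rw [hg]
    simp only [LinearMap.comp_apply, Coalgebra.rTensor_counit_comul]
    simp only [TensorProduct.lid_tmul, LinearEquiv.coe_coe, one_smul]
    exact gproj_of_mem_ne ℳ hx (by omega)
  have hhval : h (Coalgebra.comul (R := k) x) =
      Coalgebra.counit (R := k) x • (1 : H) := by
    rw [hh]
    simp only [LinearMap.comp_apply, Coalgebra.lTensor_counit_comul]
    simp only [TensorProduct.rid_tmul, LinearEquiv.coe_coe, one_smul]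
    rw [gproj_of_mem_same ℳ hx]
    simp [Algebra.algebraMap_eq_smul_one]
  have hz : Coalgebra.counit (R := k) x • (1 : H) = 0 := by rw [← hhval, ← heq, hgval]
  have := congrArg (Coalgebra.counit (R := k)) hz
  simpa using this

end Graded


/-- Birkhoff decomposition: let `H` be a connected graded Hopf algebra,
`A` a commutative algebra with an idempotent Rota–Baxter projector `K`
(`K(a)K(b) = K(K(a)b + aK(b) - ab)`, `ker K ∩ im K = 0`), and `φ : H →ₐ A` a character.
Then there is a unique pair of unital maps `φ₋` (with `φ₋(H⁺) ⊆ im K`) and `φ₊` (with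
`φ₊(H⁺) ⊆ ker K`) such that `φ = φ₋^{⋆-1} ⋆ φ₊`; moreover this pair is given by the
recursions `φ₋(x) = -K(φ(x) + Σ φ₋(x')φ(x''))` and
`φ₊(x) = (id - K)(φ(x) + Σ φ₋(x')φ(x''))` on homogeneous `x` of positive degree,
where `φ(x) + Σ φ₋(x')φ(x'') = (φ₋ ⋆ φ)(x) - φ₋(x)`. -/
theorem birkhoff_decomposition
    {k H A : Type*} [Field k] [Ring H] [HopfAlgebra k H] [CommRing A] [Algebra k A]
    (ℳ : ℕ → Submodule k H) [GradedAlgebra ℳ]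
    (hcomul : ∀ (n : ℕ), ∀ x ∈ ℳ n, comul (R := k) x ∈
      ⨆ (p : ℕ × ℕ) (_ : p.1 + p.2 = n),
        LinearMap.range (TensorProduct.map (ℳ p.1).subtype (ℳ p.2).subtype))
    (hconn : ℳ 0 = Submodule.span k {(1 : H)})
    (K : A →ₗ[k] A) (hK : K ∘ₗ K = K)
    (hdisj : LinearMap.ker K ⊓ LinearMap.range K = ⊥)
    (hRB : ∀ a b : A, K a * K b = K (K a * b + a * K b - a * b))
    (φ : H →ₐ[k] A) :
    ∃ p : (H →ₗ[k] A) × (H →ₗ[k] A),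
      -- the defining properties of the Birkhoff pair `(φ₋, φ₊)`
      (p.1 1 = 1 ∧ p.2 1 = 1
        ∧ (∀ (n : ℕ), 0 < n → ∀ x ∈ ℳ n,
            p.1 x ∈ LinearMap.range K ∧ p.2 x ∈ LinearMap.ker K)
        ∧ ∃ ψ : H →ₗ[k] A,
            conv ψ p.1 = convUnit k H A ∧ conv p.1 ψ = convUnit k H A
              ∧ φ.toLinearMap = conv ψ p.2)
      -- uniqueness of any pair with these properties
      ∧ (∀ q : (H →ₗ[k] A) × (H →ₗ[k] A),
          (q.1 1 = 1 ∧ q.2 1 = 1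
            ∧ (∀ (n : ℕ), 0 < n → ∀ x ∈ ℳ n,
                q.1 x ∈ LinearMap.range K ∧ q.2 x ∈ LinearMap.ker K)
            ∧ ∃ ψ : H →ₗ[k] A,
                conv ψ q.1 = convUnit k H A ∧ conv q.1 ψ = convUnit k H A
                  ∧ φ.toLinearMap = conv ψ q.2) → q = p)
      -- the recursive formulas for `φ₋` and `φ₊`
      ∧ (∀ (n : ℕ), 0 < n → ∀ x ∈ ℳ n,
          p.1 x = -K (conv p.1 φ.toLinearMap x - p.1 x)
            ∧ p.2 x = (conv p.1 φ.toLinearMap x - p.1 x)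
                - K (conv p.1 φ.toLinearMap x - p.1 x)) := by
  classical
  set e : H →ₗ[k] A := convUnit k H A with he
  have hone : (1 : H) ∈ ℳ 0 := SetLike.one_mem_graded ℳ
  have he1 : e (1 : H) = 1 := by
    simp [he, convUnit]
  have hmem0 : ∀ y ∈ ℳ 0, ∃ β : k, y = β • (1 : H) := by
    intro y hy
    obtain ⟨β, hβ⟩ := Submodule.mem_span_singleton.mp (hconn ▸ hy)
    exact ⟨β, hβ.symm⟩
  set γ : H →ₗ[k] A := φ.toLinearMap - e with hγdef
  have hγ0 : ∀ y ∈ ℳ 0, γ y = 0 := by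
    intro y hy
    obtain ⟨β, rfl⟩ := hmem0 y hy
    simp [hγdef, LinearMap.sub_apply, he1, map_smul]
  set Fm : (H →ₗ[k] A) → (H →ₗ[k] A) := fun ρ => e - K ∘ₗ (conv ρ γ) with hFm
  have hFm_apply : ∀ ρ x, Fm ρ x = e x - K (conv ρ γ x) := by
    intro ρ x; simp [hFm, LinearMap.sub_apply, LinearMap.comp_apply]
  set φseq : ℕ → (H →ₗ[k] A) := fun m => Fm^[m] 0 with hφseq
  -- difference of iterates vanishes in low degree
  have hdiff : ∀ m (ρ σ : H →ₗ[k] A), ∀ n, n < m → ∀ x ∈ ℳ n, Fm^[m] ρ x = Fm^[m] σ x := by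
    intro m
    induction m with
    | zero => intro ρ σ n hn; omega
    | succ m ih =>
      intro ρ σ n hn x hx
      rw [Function.iterate_succ_apply', Function.iterate_succ_apply']
      have hzero : conv (Fm^[m] ρ - Fm^[m] σ) γ x = 0 := by
        refine conv_vanish ℳ hcomul _ γ ?_ hγ0 x hx
        intro p hp y hy
        simp [LinearMap.sub_apply, ih ρ σ p (by omega) y hy]
      rw [conv_sub_left] at hzero
      have hkey : conv (Fm^[m] ρ) γ x = conv (Fm^[m] σ) γ x := by
        simpa [LinearMap.sub_apply, sub_eq_zero] using hzero
      rw [hFm_apply, hFm_apply, hkey]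
  have hagree : ∀ n m m', n < m → m ≤ m' → ∀ x ∈ ℳ n, φseq m' x = φseq m x := by
    intro n m m' hnm hmm' x hx
    obtain ⟨d, rfl⟩ := Nat.exists_eq_add_of_le hmm'
    rw [hφseq]
    simp only []
    rw [Function.iterate_add_apply]
    exact hdiff m _ 0 n hnm x hx
  set φm : H →ₗ[k] A := glue ℳ (fun n => φseq (n + 1)) with hφm
  have hφm_at : ∀ n, ∀ x ∈ ℳ n, φm x = φseq (n + 1) x := by
    intro n x hx; exact glue_apply ℳ _ hx
  have hφm_low : ∀ n p, p < n → ∀ y ∈ ℳ p, φm y = φseq n y := by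
    intro n p hp y hy
    rw [hφm_at p y hy]
    exact (hagree p (p + 1) n (by omega) (by omega) y hy).symm
  -- fixed point property
  have hfix : ∀ n, ∀ x ∈ ℳ n, φm x = e x - K (conv φm γ x) := by
    intro n x hx
    have h1 : conv φm γ x = conv (φseq n) γ x := by
      have hzero : conv (φm - φseq n) γ x = 0 := by
        refine conv_vanish ℳ hcomul _ γ ?_ hγ0 x hx
        intro p hp y hy
        simp [LinearMap.sub_apply, hφm_low n p hp y hy]
      rw [conv_sub_left] at hzero
      simpa [LinearMap.sub_apply, sub_eq_zero] using hzero
    rw [hφm_at n x hx, h1, hφseq]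
    simp only []
    rw [Function.iterate_succ_apply']
    rw [hFm_apply]
  -- basic values
  have hφm1 : φm (1 : H) = 1 := by
    have hz : conv φm γ (1 : H) = 0 :=
      conv_vanish ℳ hcomul φm γ (fun p hp => by omega) hγ0 1 hone
    rw [hfix 0 1 hone, hz, he1, map_zero, sub_zero]
  have hεpos : ∀ n, 0 < n → ∀ x ∈ ℳ n, e x = 0 := by
    intro n hn x hx
    have := counit_vanish ℳ hcomul hconn hn x hx
    simp [he, convUnit, this]
  have hconvγ : ∀ ρ : H →ₗ[k] A, conv ρ γ = conv ρ φ.toLinearMap - ρ := by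
    intro ρ
    rw [hγdef, conv_sub_right, conv_unit_right]
  -- recursion for φm
  have hrec1 : ∀ n, 0 < n → ∀ x ∈ ℳ n,
      φm x = -K (conv φm φ.toLinearMap x - φm x) := by
    intro n hn x hx
    have := hfix n x hx
    rw [hεpos n hn x hx, hconvγ φm] at this
    simpa [LinearMap.sub_apply] using this
  set φp : H →ₗ[k] A := conv φm φ.toLinearMap with hφp
  have hφp1 : φp (1 : H) = 1 := by
    have : Coalgebra.comul (R := k) (1 : H) = (1 : H) ⊗ₜ[k] (1 : H) := by
      rw [Bialgebra.comul_one]; rfl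
    simp [hφp, conv, this, LinearMap.mul'_apply, hφm1]
  have hrec2 : ∀ n, 0 < n → ∀ x ∈ ℳ n,
      φp x = (conv φm φ.toLinearMap x - φm x) - K (conv φm φ.toLinearMap x - φm x) := by
    intro n hn x hx
    have h1 := hrec1 n hn x hx
    linear_combination h1
  have hKK : ∀ a : A, K (K a) = K a := fun a => congr($(hK) a)
  have hmemK : ∀ n, 0 < n → ∀ x ∈ ℳ n,
      φm x ∈ LinearMap.range K ∧ φp x ∈ LinearMap.ker K := by
    intro n hn x hx
    constructor
    · rw [hrec1 n hn x hx]
      exact ⟨-(conv φm φ.toLinearMap x - φm x), by rw [map_neg]⟩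
    · rw [LinearMap.mem_ker, hrec2 n hn x hx, map_sub, hKK, sub_self]
  -- the convolution inverse of φm
  set ν : H →ₗ[k] A := φm - e with hν
  have hν0 : ∀ y ∈ ℳ 0, ν y = 0 := by
    intro y hy
    obtain ⟨β, rfl⟩ := hmem0 y hy
    simp [hν, LinearMap.sub_apply, map_smul, hφm1, he1]
  set νpow : ℕ → (H →ₗ[k] A) := fun m => (fun ρ => conv ρ ν)^[m] e with hνpow
  have hνpow_zero : νpow 0 = e := rfl
  have hνpow_succ : ∀ m, νpow (m + 1) = conv (νpow m) ν := by
    intro m; rw [hνpow]; simp only []; rw [Function.iterate_succ_apply']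
  have hνpow_low : ∀ m p, p < m → ∀ y ∈ ℳ p, νpow m y = 0 := by
    intro m
    induction m with
    | zero => omega
    | succ m ih =>
      intro p hp y hy
      rw [hνpow_succ]
      exact conv_vanish ℳ hcomul _ ν (fun q hq z hz => ih q (by omega) z hz) hν0 y hy
  set S : ℕ → (H →ₗ[k] A) := fun n => ∑ m ∈ Finset.range (n + 1), ((-1 : ℤ) ^ m • νpow m)
    with hS
  have hS_apply : ∀ n x, S n x = ∑ m ∈ Finset.range (n + 1), ((-1 : ℤ) ^ m • νpow m x) := by
    intro n x
    rw [hS]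
    simp only []
    rw [LinearMap.coe_sum, Finset.sum_apply]
    simp [LinearMap.smul_apply]
  set ψ : H →ₗ[k] A := glue ℳ S with hψdef
  have hψ_at : ∀ n, ∀ x ∈ ℳ n, ψ x = S n x := by
    intro n x hx; exact glue_apply ℳ _ hx
  have hSagree : ∀ p n, p ≤ n → ∀ y ∈ ℳ p, S n y = S p y := by
    intro p n hpn y hy
    rw [hS_apply, hS_apply]
    rw [show n + 1 = (p + 1) + (n - p) by omega, Finset.sum_range_add]
    have hz : ∀ m ∈ Finset.range (n - p), ((-1 : ℤ) ^ (p + 1 + m) • νpow (p + 1 + m) y) = 0 := by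
      intro m _
      rw [hνpow_low (p + 1 + m) p (by omega) y hy, smul_zero]
    rw [Finset.sum_congr rfl hz]
    simp
  have hψ_low : ∀ n p, p < n → ∀ y ∈ ℳ p, ψ y = S n y := by
    intro n p hp y hy
    rw [hψ_at p y hy, hSagree p n (le_of_lt hp) y hy]
  -- telescoping identity
  have htel : ∀ n x, x ∈ ℳ n →
      S n x + (∑ m ∈ Finset.range (n + 1), ((-1 : ℤ) ^ m • νpow (m + 1) x)) = e x := by
    intro n x hx
    rw [hS_apply, ← Finset.sum_add_distrib]
    have hterm : ∀ m ∈ Finset.range (n + 1),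
        ((-1 : ℤ) ^ m • νpow m x + (-1 : ℤ) ^ m • νpow (m + 1) x) =
          ((fun m => (-1 : ℤ) ^ m • νpow m x) m - (fun m => (-1 : ℤ) ^ m • νpow m x) (m + 1)) := by
      intro m _
      simp only [pow_succ, mul_comm, mul_smul, neg_smul, one_smul, neg_neg]
      abel
    rw [Finset.sum_congr rfl hterm, Finset.sum_range_sub']
    rw [hνpow_low (n + 1) n (by omega) x hx]
    simp [hνpow_zero]
  -- left inverse
  have hφm_split : φm = e + ν := by rw [hν]; abel
  have hinvL : conv ψ φm = e := by
    apply ext_of_graded ℳ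
    intro n x hx
    rw [hφm_split, conv_add_right, conv_unit_right]
    have hψν : conv ψ ν x = conv (S n) ν x := by
      have hzero : conv (ψ - S n) ν x = 0 := by
        refine conv_vanish ℳ hcomul _ ν ?_ hν0 x hx
        intro p hp y hy
        simp [LinearMap.sub_apply, hψ_low n p hp y hy]
      rw [conv_sub_left] at hzero
      simpa [LinearMap.sub_apply, sub_eq_zero] using hzero
    have hSν : conv (S n) ν = ∑ m ∈ Finset.range (n + 1), ((-1 : ℤ) ^ m • νpow (m + 1)) := by
      rw [hS]
      simp only []
      rw [show conv (∑ m ∈ Finset.range (n + 1), ((-1 : ℤ) ^ m • νpow m)) ν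
            = (convL ν) (∑ m ∈ Finset.range (n + 1), ((-1 : ℤ) ^ m • νpow m)) from rfl,
        map_sum]
      refine Finset.sum_congr rfl fun m _ => ?_
      rw [show (convL ν) ((-1 : ℤ) ^ m • νpow m) = conv ((-1 : ℤ) ^ m • νpow m) ν from rfl,
        conv_zsmul_left, hνpow_succ]
    have hsum : (∑ m ∈ Finset.range (n + 1), ((-1 : ℤ) ^ m • νpow (m + 1))) x
        = ∑ m ∈ Finset.range (n + 1), ((-1 : ℤ) ^ m • νpow (m + 1) x) := by
      rw [LinearMap.coe_sum, Finset.sum_apply]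
      simp [LinearMap.smul_apply]
    rw [LinearMap.add_apply, hψ_at n x hx, hψν, hSν, hsum]
    exact htel n x hx
  -- right inverse
  have hcomm : ∀ m, conv ν (νpow m) = conv (νpow m) ν := by
    intro m
    induction m with
    | zero => rw [hνpow_zero, conv_unit_right, conv_unit_left]
    | succ m ih => rw [hνpow_succ, ← conv_assoc, ih]
  have hinvR : conv φm ψ = e := by
    apply ext_of_graded ℳ
    intro n x hx
    rw [hφm_split, conv_add_left, conv_unit_left]
    have hνψ : conv ν ψ x = conv ν (S n) x := by
      have hzero : conv ν (ψ - S n) x = 0 := by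
        refine conv_vanish' ℳ hcomul ν _ ?_ hν0 x hx
        intro p hp y hy
        simp [LinearMap.sub_apply, hψ_low n p hp y hy]
      rw [conv_sub_right] at hzero
      simpa [LinearMap.sub_apply, sub_eq_zero] using hzero
    have hSν : conv ν (S n) = ∑ m ∈ Finset.range (n + 1), ((-1 : ℤ) ^ m • νpow (m + 1)) := by
      rw [hS]
      simp only []
      rw [show conv ν (∑ m ∈ Finset.range (n + 1), ((-1 : ℤ) ^ m • νpow m))
            = (convR ν) (∑ m ∈ Finset.range (n + 1), ((-1 : ℤ) ^ m • νpow m)) from rfl,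
        map_sum]
      refine Finset.sum_congr rfl fun m _ => ?_
      rw [show (convR ν) ((-1 : ℤ) ^ m • νpow m) = conv ν ((-1 : ℤ) ^ m • νpow m) from rfl,
        conv_zsmul_right, hcomm, hνpow_succ]
    have hsum : (∑ m ∈ Finset.range (n + 1), ((-1 : ℤ) ^ m • νpow (m + 1))) x
        = ∑ m ∈ Finset.range (n + 1), ((-1 : ℤ) ^ m • νpow (m + 1) x) := by
      rw [LinearMap.coe_sum, Finset.sum_apply]
      simp [LinearMap.smul_apply]
    rw [LinearMap.add_apply, hψ_at n x hx, hνψ, hSν, hsum]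
    exact htel n x hx
  have hφeq : φ.toLinearMap = conv ψ φp := by
    rw [hφp, ← conv_assoc, hinvL, conv_unit_left]
  refine ⟨(φm, φp), ⟨hφm1, hφp1, hmemK, ⟨ψ, hinvL, hinvR, hφeq⟩⟩, ?_,
    fun n hn x hx => ⟨hrec1 n hn x hx, hrec2 n hn x hx⟩⟩
  -- uniqueness
  rintro ⟨q1, q2⟩ ⟨hq1one, hq2one, hqK, ψ', hψ'L, hψ'R, hφeq'⟩
  have hq2eq : q2 = conv q1 φ.toLinearMap := by
    rw [hφeq', ← conv_assoc, hψ'R, conv_unit_left]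
  have hq1eq : ∀ n, ∀ x ∈ ℳ n, q1 x = φm x := by
    intro n
    induction n using Nat.strong_induction_on with
    | _ n ih =>
      intro x hx
      rcases Nat.eq_zero_or_pos n with rfl | hn
      · obtain ⟨β, rfl⟩ := hmem0 x hx
        simp [map_smul, hq1one, hφm1]
      · have hzero : conv (q1 - φm) γ x = 0 := by
          refine conv_vanish ℳ hcomul _ γ ?_ hγ0 x hx
          intro p hp y hy
          simp [LinearMap.sub_apply, ih p hp y hy]
        rw [hconvγ (q1 - φm), conv_sub_left] at hzero
        have hw : q2 x - φp x = q1 x - φm x := by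
          rw [hq2eq, hφp]
          simpa [LinearMap.sub_apply, sub_eq_zero] using hzero
        have hwk : q2 x - φp x ∈ LinearMap.ker K :=
          Submodule.sub_mem _ (hqK n hn x hx).2 (hmemK n hn x hx).2
        have hwr : q2 x - φp x ∈ LinearMap.range K := by
          rw [hw]
          exact Submodule.sub_mem _ (hqK n hn x hx).1 (hmemK n hn x hx).1
        have : q2 x - φp x ∈ LinearMap.ker K ⊓ LinearMap.range K := ⟨hwk, hwr⟩
        rw [hdisj, Submodule.mem_bot] at this
        rw [hw] at this
        exact sub_eq_zero.mp this
  have hq1 : q1 = φm := ext_of_graded ℳ hq1eq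
  have hq2 : q2 = φp := by rw [hq2eq, hq1, ← hφp]
  simp [hq1, hq2]
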